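/- arXiv:2108.00471 — 2 statements merged into one kernel-verified Lean document; each statement's English description precedes it below -/
import Mathlib

section
/- Let A be a right coherent ring, let (X, Y) be an intermediate t-structure in D^b(mod A) with heart H, and let (X', Y') be the lifted t-structure (^⊥(X^⊥), X^⊥) in D(Mod A) with heart H'. Then (X' ∩ D^b(mod A), Y' ∩ D^b(mod A)) = (X, Y), and consequently H = H' ∩ D^b(mod A). -/
/-!
Common definitions for formalizing "Lifting and restricting t-structures"
(Marks–Zvonareva). Right `A`-modules are modelled as `ModuleCat Aᵐᵒᵖ`.
`D(Mod A)` is the derived category `DerivedCategory (ModuleCat Aᵐᵒᵖ)`;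
`D^b(mod A)` is modelled, as is standard for coherent rings, as the full
subcategory of objects with bounded, finitely presented cohomologies.
Directed homotopy colimits are computed as colimits of directed diagrams
of complexes (filtered colimits of complexes of modules are exact).
-/

open CategoryTheory Limits Pretriangulated Opposite

noncomputable section

namespace Paper

universe u

/-- A ring `B` is right coherent if every finitely generated submodule of a
finitely presented right `B`-module is finitely presented. -/
def RightCoherent (B : Type u) [Ring B] : Prop :=
  ∀ (M : Type u) [AddCommGroup M] [Module Bᵐᵒᵖ M],
    Module.FinitePresentation Bᵐᵒᵖ M →
      ∀ N : Submodule Bᵐᵒᵖ M, N.FG → Module.FinitePresentation Bᵐᵒᵖ N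

noncomputable instance (R : Type) [Ring R] :
    HasDerivedCategory (ModuleCat.{0} Rᵐᵒᵖ) :=
  HasDerivedCategory.standard _

/-- The category of right `A`-modules. -/
abbrev Mod (A : Type) [Ring A] := ModuleCat.{0} Aᵐᵒᵖ

/-- The unbounded derived category `D(Mod A)` of all right `A`-modules. -/
abbrev D (A : Type) [Ring A] := DerivedCategory (Mod A)

variable (A : Type) [Ring A]

/-- The `n`-th cohomology functor on the derived category. -/
abbrev H (n : ℤ) : D A ⥤ Mod A := DerivedCategory.homologyFunctor (Mod A) n

/-- The aisle `D^{≤ n}` of (the shift of) the standard t-structure. -/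
def stdLE (n : ℤ) : Set (D A) := {Z | ∀ i : ℤ, n < i → IsZero ((H A i).obj Z)}

/-- The coaisle `D^{≥ n}` of (the shift of) the standard t-structure. -/
def stdGE (n : ℤ) : Set (D A) := {Z | ∀ i : ℤ, i < n → IsZero ((H A i).obj Z)}

/-- The bounded derived category `D^b(mod A)` of finitely presented modules,
realized (for coherent `A`) as the full subcategory of `D(Mod A)` of complexes
with bounded cohomology, all of whose cohomologies are finitely presented. -/
def Dbfp : Set (D A) :=
  {Z | (∀ n : ℤ, Module.FinitePresentation Aᵐᵒᵖ ((H A n).obj Z)) ∧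
    ∃ a b : ℤ, ∀ i : ℤ, (i < a ∨ b < i) → IsZero ((H A i).obj Z)}

/-- A t-structure on a (strict, full triangulated) subcategory `S` of `D(Mod A)`,
given by a pair of strict full subcategories `(X, Y)` of `S`:
both classes are closed under direct summands, `Hom(X, Y) = 0`, `X` is closed
under positive shifts, and every object of `S` admits an approximation triangle
`X' → Z → Y' → X'[1]` with `X' ∈ X`, `Y' ∈ Y`. -/
structure IsTStructureOn (S X Y : Set (D A)) : Prop where
  subsetX : X ⊆ S
  subsetY : Y ⊆ S
  summandX : ∀ Z ∈ X, ∀ (W : D A) (s : W ⟶ Z) (r : Z ⟶ W), s ≫ r = 𝟙 W → W ∈ X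
  summandY : ∀ Z ∈ Y, ∀ (W : D A) (s : W ⟶ Z) (r : Z ⟶ W), s ≫ r = 𝟙 W → W ∈ Y
  homZero : ∀ P ∈ X, ∀ Q ∈ Y, ∀ f : P ⟶ Q, f = 0
  shiftX : ∀ Z ∈ X, Z⟦(1 : ℤ)⟧ ∈ X
  exists_triangle : ∀ Z ∈ S, ∃ (P Q : D A) (_ : P ∈ X) (_ : Q ∈ Y)
    (f : P ⟶ Z) (g : Z ⟶ Q) (h : Q ⟶ P⟦(1 : ℤ)⟧),
      Triangle.mk f g h ∈ distTriang (D A)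

/-- A t-structure on all of `D(Mod A)`. -/
def IsTStructure (X Y : Set (D A)) : Prop := IsTStructureOn A Set.univ X Y

/-- A t-structure `(X, Y)` on `D(Mod A)` is intermediate if
`D^{≤ m} ⊆ X ⊆ D^{≤ n}` for some integers `m ≤? n`. -/
def IsIntermediate (X : Set (D A)) : Prop :=
  ∃ m n : ℤ, stdLE A m ⊆ X ∧ X ⊆ stdLE A n

/-- Intermediacy for a t-structure on the subcategory `D^b(mod A)`:
`D^b(A)^{≤ m} ⊆ X ⊆ D^b(A)^{≤ n}`. -/
def IsIntermediateOn (S X : Set (D A)) : Prop :=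
  ∃ m n : ℤ, stdLE A m ∩ S ⊆ X ∧ X ⊆ stdLE A n

/-- `C^⊥ = {Z : Hom(C, Z) = 0 for all C ∈ C}`. -/
def rightPerp (Cl : Set (D A)) : Set (D A) :=
  {Z | ∀ P ∈ Cl, ∀ f : P ⟶ Z, f = 0}

/-- `^⊥C = {Z : Hom(Z, C) = 0 for all C ∈ C}`. -/
def leftPerp (Cl : Set (D A)) : Set (D A) :=
  {Z | ∀ P ∈ Cl, ∀ f : Z ⟶ P, f = 0}

/-- An object `Z` of `D(Mod A)` is compact if `Hom(Z, −)` commutes with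
(small) coproducts. -/
def IsCompactObj (Z : D A) : Prop :=
  ∀ ι : Type, Nonempty
    (PreservesColimitsOfShape (Discrete ι) (preadditiveCoyoneda.obj (op Z)))

/-- `(X, Y)` is a compactly generated t-structure: it is a t-structure and
`Y = S^⊥` for a set `S` of compact objects. -/
def IsCompactlyGeneratedTStructure (X Y : Set (D A)) : Prop :=
  IsTStructure A X Y ∧
    ∃ S : Set (D A), (∀ s ∈ S, IsCompactObj A s) ∧ Y = rightPerp A S

/-- `Z` is a directed homotopy colimit of objects of `C`: there is a directed
(filtered) small category `I` and an `I`-diagram of complexes, all of whose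
vertices lie in `C` (viewed in the derived category), such that `Z` is
isomorphic to its (homotopy) colimit. (Directed homotopy colimits in
`D(Mod A)` are computed as direct limits of complexes.) -/
def IsDirHocolimOf (Z : D A) (Cl : Set (D A)) : Prop :=
  ∃ (I : Cat.{0, 0}) (F : I ⥤ CochainComplex (Mod A) ℤ),
    IsFiltered I ∧ (∀ i : I, DerivedCategory.Q.obj (F.obj i) ∈ Cl) ∧
      Nonempty (Z ≅ DerivedCategory.Q.obj (colimit F))

/-- `hocolim→(C)`: the smallest (strict, full) subcategory of `D(Mod A)`
containing `C` and closed under directed homotopy colimits of diagrams with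
vertices in `C`. -/
def hocolimClosure (Cl : Set (D A)) : Set (D A) :=
  Cl ∪ {Z | IsDirHocolimOf A Z Cl}

/-- A class `C ⊆ D(Mod A)` is closed under directed homotopy colimits. -/
def ClosedUnderDirHocolim (Cl : Set (D A)) : Prop :=
  ∀ Z : D A, IsDirHocolimOf A Z Cl → Z ∈ Cl

/-- The shifted class `C[n] = {Z[n] : Z ∈ C}` (as a strict subcategory). -/
def shiftSet (Cl : Set (D A)) (n : ℤ) : Set (D A) :=
  {Z | ∃ W ∈ Cl, Nonempty (Z ≅ W⟦n⟧)}

/-- The heart `X ∩ Y[1]` of a t-structure `(X, Y)`. -/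
def heartSet (X Y : Set (D A)) : Set (D A) := X ∩ shiftSet A Y 1

/-- The heart of a t-structure `(X, Y)`, as a full subcategory. -/
abbrev HeartCat (X Y : Set (D A)) := ObjectProperty.FullSubcategory (fun Z => Z ∈ heartSet A X Y)



universe w₂ v₂ u₂

/-- Full subcategories of preadditive categories are preadditive. -/
instance fullSubcategoryPreadditive {C : Type u₂} [Category.{v₂} C] [Preadditive C]
    (P : C → Prop) : Preadditive (ObjectProperty.FullSubcategory P) where
  homGroup X Y := InducedCategory.homEquiv.addCommGroup
  add_comp _ _ _ _ _ _ := by ext; apply Preadditive.add_comp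
  comp_add _ _ _ _ _ _ := by ext; apply Preadditive.comp_add

/-- An object `X` of a category is finitely presented if `Hom(X, −)` commutes
with direct limits (filtered colimits). -/
def IsFPObject {𝒜 : Type u₂} [Category.{v₂} 𝒜] (X : 𝒜) : Prop :=
  ∀ I : Cat.{0, 0}, IsFiltered I →
    Nonempty (PreservesColimitsOfShape I (coyoneda.obj (op X)))

/-- A Grothendieck category: an abelian category with a separator (generator)
in which directed colimits exist and are exact (AB5). -/
structure IsGrothendieckCat (𝒜 : Type u₂) [Category.{v₂} 𝒜] : Prop where
  abelian : Nonempty (Abelian 𝒜)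
  hasFilteredColimits : ∀ I : Cat.{0, 0}, IsFiltered I → HasColimitsOfShape I 𝒜
  ab5 : ∀ (I : Cat.{0, 0}) [HasColimitsOfShape I 𝒜], IsFiltered I →
    Nonempty (PreservesFiniteLimits (colim (J := I) (C := 𝒜)))
  hasSeparator : ∃ G : 𝒜, IsSeparator G

/-- A locally coherent Grothendieck category: a Grothendieck category with a
generating set of finitely presented objects in which the finitely presented
objects form an exact abelian subcategory (equivalently, are closed under
kernels). -/
structure IsLocallyCoherentCat (𝒜 : Type u₂) [Category.{v₂} 𝒜]
    [HasZeroMorphisms 𝒜] : Prop where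
  grothendieck : IsGrothendieckCat 𝒜
  fpGenerators : ∃ G : Set 𝒜, (∀ X ∈ G, IsFPObject X) ∧ ObjectProperty.IsSeparating (fun X => X ∈ G)
  fpClosedUnderKernels : ∀ (X Y : 𝒜) (f : X ⟶ Y), IsFPObject X → IsFPObject Y →
    ∀ (K : 𝒜) (k : K ⟶ X) (w : k ≫ f = 0),
      Nonempty (IsLimit (KernelFork.ofι k w)) → IsFPObject K


/-- The finitely presented right `A`-modules, i.e. the objects of `mod A`. -/
def fpMods : Set (Mod A) := {M | Module.FinitePresentation Aᵐᵒᵖ M}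

/-- A torsion pair `(T, F)` on a (strict, full) subcategory `S` of `Mod A`:
`Hom(T, F) = 0` and every `M ∈ S` fits into a short exact sequence
`0 → t(M) → M → M/t(M) → 0` with `t(M) ∈ T`, `M/t(M) ∈ F`. -/
structure IsTorsionPairOn (S T F : Set (Mod A)) : Prop where
  subsetT : T ⊆ S
  subsetF : F ⊆ S
  isoClosedT : ∀ M ∈ T, ∀ N : Mod A, Nonempty (N ≅ M) → N ∈ T
  isoClosedF : ∀ M ∈ F, ∀ N : Mod A, Nonempty (N ≅ M) → N ∈ F
  homZero : ∀ M ∈ T, ∀ N ∈ F, ∀ f : M ⟶ N, f = 0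
  exists_ses : ∀ M ∈ S, ∃ (t f : Mod A) (_ : t ∈ T) (_ : f ∈ F)
    (i : t ⟶ M) (p : M ⟶ f) (z : i ≫ p = 0), (ShortComplex.mk i p z).ShortExact

/-- A torsion pair in `Mod A`. -/
def IsTorsionPair (T F : Set (Mod A)) : Prop :=
  IsTorsionPairOn A Set.univ T F

/-- The closure `lim→(C)` of a class of modules under direct limits:
the class of all direct limits of directed systems with terms in `C`. -/
def limClosure (Cl : Set (Mod A)) : Set (Mod A) :=
  {M | ∃ (I : Cat.{0, 0}) (F : I ⥤ Mod A),
    IsFiltered I ∧ (∀ i : I, F.obj i ∈ Cl) ∧ Nonempty (M ≅ colimit F)}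

/-- A torsion pair `(T, F)` in `Mod A` is of finite type if `F` is closed
under direct limits. -/
def IsFiniteType (T F : Set (Mod A)) : Prop :=
  IsTorsionPair A T F ∧ limClosure A F ⊆ F

/-- `^⊥F` in `Mod A`. -/
def modLeftPerp (F : Set (Mod A)) : Set (Mod A) :=
  {M | ∀ N ∈ F, ∀ f : M ⟶ N, f = 0}

/-- `T^⊥` in `Mod A`. -/
def modRightPerp (T : Set (Mod A)) : Set (Mod A) :=
  {N | ∀ M ∈ T, ∀ f : M ⟶ N, f = 0}

/-- A pure submodule: every finite system of `A`-linear equations with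
constants in `N` that is solvable in `M` is solvable in `N`. -/
def IsPureSubmodule {R : Type u₂} [Ring R] {M : Type u₂} [AddCommGroup M]
    [Module R M] (N : Submodule R M) : Prop :=
  ∀ (m n : ℕ) (a : Matrix (Fin m) (Fin n) R) (x : Fin m → N),
    (∃ y : Fin n → M, ∀ i, (∑ j, a i j • y j) = (x i : M)) →
      ∃ y : Fin n → N, ∀ i, (∑ j, a i j • y j) = x i

/-- A definable subcategory of `Mod A`: a strict full subcategory closed under
products, direct limits and pure submodules. -/
structure IsDefinable (Dc : Set (Mod A)) : Prop where
  isoClosed : ∀ M ∈ Dc, ∀ N : Mod A, Nonempty (N ≅ M) → N ∈ Dc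
  prodClosed : ∀ (ι : Type) (f : ι → Mod A) (c : Fan f), IsLimit c →
    (∀ i, f i ∈ Dc) → c.pt ∈ Dc
  limClosed : limClosure A Dc ⊆ Dc
  pureClosed : ∀ M ∈ Dc, ∀ N : Submodule Aᵐᵒᵖ M, IsPureSubmodule N →
    ModuleCat.of Aᵐᵒᵖ N ∈ Dc


/-- The aisle of the HRS-t-structure associated to a torsion class `T`:
`{Z : Hⁱ(Z) = 0 for i > 0 and H⁰(Z) ∈ T}`. -/
def hrsAisle (T : Set (Mod A)) : Set (D A) :=
  {Z | (∀ i : ℤ, 0 < i → IsZero ((H A i).obj Z)) ∧ (H A 0).obj Z ∈ T}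

/-- The coaisle of the HRS-t-structure associated to a torsion-free class `F`:
`{Z : Hⁱ(Z) = 0 for i < 0 and H⁰(Z) ∈ F}`. -/
def hrsCoaisle (F : Set (Mod A)) : Set (D A) :=
  {Z | (∀ i : ℤ, i < 0 → IsZero ((H A i).obj Z)) ∧ (H A 0).obj Z ∈ F}

/-- `T^{⊥_{>0}} = {Z : Hom(T, Z[i]) = 0 for all i > 0}`. -/
def perpGT (T : D A) : Set (D A) :=
  {Z | ∀ i : ℤ, 0 < i → ∀ f : T ⟶ Z⟦i⟧, f = 0}

/-- `T^{⊥_{≤0}} = {Z : Hom(T, Z[i]) = 0 for all i ≤ 0}`. -/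
def perpLE (T : D A) : Set (D A) :=
  {Z | ∀ i : ℤ, i ≤ 0 → ∀ f : T ⟶ Z⟦i⟧, f = 0}

/-- `^{⊥_{≤0}}C = {Z : Hom(Z, C[i]) = 0 for all i ≤ 0}`. -/
def coperpLE (Co : D A) : Set (D A) :=
  {Z | ∀ i : ℤ, i ≤ 0 → ∀ f : Z ⟶ Co⟦i⟧, f = 0}

/-- `^{⊥_{>0}}C = {Z : Hom(Z, C[i]) = 0 for all i > 0}`. -/
def coperpGT (Co : D A) : Set (D A) :=
  {Z | ∀ i : ℤ, 0 < i → ∀ f : Z ⟶ Co⟦i⟧, f = 0}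

/-- An object `T` of `D(Mod A)` is silting if `(T^{⊥_{>0}}, T^{⊥_{≤0}})` is a
t-structure. -/
def IsSilting (T : D A) : Prop := IsTStructure A (perpGT A T) (perpLE A T)

/-- An object `C` of `D(Mod A)` is cosilting if `(^{⊥_{≤0}}C, ^{⊥_{>0}}C)` is a
t-structure. -/
def IsCosilting (Co : D A) : Prop :=
  IsTStructure A (coperpLE A Co) (coperpGT A Co)

/-- The subcategory `K^b(proj A)` of `D(Mod A)`: objects isomorphic to bounded
complexes of finitely generated projective modules. -/
def KbProj : Set (D A) :=
  {Z | ∃ P : CochainComplex (Mod A) ℤ,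
    (∀ n : ℤ, Projective (P.X n) ∧ Module.Finite Aᵐᵒᵖ (P.X n)) ∧
    (∃ a b : ℤ, ∀ i : ℤ, (i < a ∨ b < i) → IsZero (P.X i)) ∧
    Nonempty (Z ≅ DerivedCategory.Q.obj P)}

/-- The subcategory `K^b(inj A)` of `D(Mod A)`: objects isomorphic to bounded
complexes of finitely generated injective modules. -/
def KbInj : Set (D A) :=
  {Z | ∃ P : CochainComplex (Mod A) ℤ,
    (∀ n : ℤ, Injective (P.X n) ∧ Module.Finite Aᵐᵒᵖ (P.X n)) ∧
    (∃ a b : ℤ, ∀ i : ℤ, (i < a ∨ b < i) → IsZero (P.X i)) ∧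
    Nonempty (Z ≅ DerivedCategory.Q.obj P)}

/-- Objects isomorphic to bounded complexes of (not necessarily finitely
generated) projective modules. -/
def BoundedProjComplexes : Set (D A) :=
  {Z | ∃ P : CochainComplex (Mod A) ℤ,
    (∀ n : ℤ, Projective (P.X n)) ∧
    (∃ a b : ℤ, ∀ i : ℤ, (i < a ∨ b < i) → IsZero (P.X i)) ∧
    Nonempty (Z ≅ DerivedCategory.Q.obj P)}

/-- A thick subcategory of `D(Mod A)`: a strict full triangulated subcategory
closed under direct summands. -/
structure IsThickSubcat (S : Set (D A)) : Prop where
  shift : ∀ Z ∈ S, ∀ n : ℤ, Z⟦n⟧ ∈ S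
  summand : ∀ Z ∈ S, ∀ (W : D A) (s : W ⟶ Z) (r : Z ⟶ W), s ≫ r = 𝟙 W → W ∈ S
  isoClosed : ∀ Z ∈ S, ∀ W : D A, Nonempty (W ≅ Z) → W ∈ S
  ext₃ : ∀ T : Triangle (D A), (T ∈ distTriang (D A)) →
    T.obj₁ ∈ S → T.obj₂ ∈ S → T.obj₃ ∈ S

/-- The smallest thick (triangulated, summand-closed) subcategory of
`D(Mod A)` containing `T`. -/
def thickClosure (T : D A) : Set (D A) :=
  ⋂₀ {S | IsThickSubcat A S ∧ T ∈ S}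

/-- A tilting complex: `T ∈ K^b(proj A)` with `Hom(T, T[i]) = 0` for `i ≠ 0`
which generates `K^b(proj A)` as a thick subcategory. -/
def IsTilting (T : D A) : Prop :=
  T ∈ KbProj A ∧ (∀ i : ℤ, i ≠ 0 → ∀ f : T ⟶ T⟦i⟧, f = 0) ∧
    thickClosure A T = KbProj A

/-- A pair `(X, Y)` of classes in `D(Mod A)` restricts to `D^b(mod A)` if
`(X ∩ D^b(mod A), Y ∩ D^b(mod A))` is a t-structure in `D^b(mod A)`. -/
def RestrictsToDb (X Y : Set (D A)) : Prop :=
  IsTStructureOn A (Dbfp A) (X ∩ Dbfp A) (Y ∩ Dbfp A)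

/-- A co-t-structure on a subcategory `S` of `D(Mod A)`: like a t-structure,
but the first class `U` is closed under negative shifts. -/
structure IsCoTStructureOn (S U V : Set (D A)) : Prop where
  subsetU : U ⊆ S
  subsetV : V ⊆ S
  summandU : ∀ Z ∈ U, ∀ (W : D A) (s : W ⟶ Z) (r : Z ⟶ W), s ≫ r = 𝟙 W → W ∈ U
  summandV : ∀ Z ∈ V, ∀ (W : D A) (s : W ⟶ Z) (r : Z ⟶ W), s ≫ r = 𝟙 W → W ∈ V
  homZero : ∀ P ∈ U, ∀ Q ∈ V, ∀ f : P ⟶ Q, f = 0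
  shiftU : ∀ Z ∈ U, Z⟦(-1 : ℤ)⟧ ∈ U
  exists_triangle : ∀ Z ∈ S, ∃ (P Q : D A) (_ : P ∈ U) (_ : Q ∈ V)
    (f : P ⟶ Z) (g : Z ⟶ Q) (h : Q ⟶ P⟦(1 : ℤ)⟧),
      Triangle.mk f g h ∈ distTriang (D A)

/-!
Inside `S = D^b(mod A)` a t-structure is determined by either half: `Y = X^⊥ ∩ S` and
`X = ^⊥Y ∩ S`, because an object orthogonal to one half is a summand of its approximation
triangle's other vertex. Since `Y ⊆ X^⊥`, we get `X ⊆ ^⊥(X^⊥) ⊆ ^⊥Y`, so intersecting the lifted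
classes with `S` gives back `X` and `Y`; the hearts then agree because `S` is closed under shifts.
-/

section Perp

variable {A : Type} [Ring A]

lemma leftPerp_anti {C C' : Set (D A)} (h : C ⊆ C') : leftPerp A C' ⊆ leftPerp A C :=
  fun _ hZ P hP f => hZ P (h hP) f

lemma subset_leftPerp_rightPerp (C : Set (D A)) : C ⊆ leftPerp A (rightPerp A C) :=
  fun _ hP _ hZ f => hZ _ hP f

namespace IsTStructureOn

variable {S X Y : Set (D A)}

lemma subset_rightPerp (ht : IsTStructureOn A S X Y) : Y ⊆ rightPerp A X :=
  fun Q hQ P hP f => ht.homZero P hP Q hQ f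

lemma rightPerp_inter_eq (ht : IsTStructureOn A S X Y) : rightPerp A X ∩ S = Y := by
  refine Set.Subset.antisymm ?_ fun Q hQ => ⟨ht.subset_rightPerp hQ, ht.subsetY hQ⟩
  rintro Z ⟨hZX, hZS⟩
  obtain ⟨P, Q, hP, hQ, f, g, _, hT⟩ := ht.exists_triangle Z hZS
  obtain ⟨r, hr⟩ := Triangle.yoneda_exact₂ _ hT (𝟙 Z)
    ((Category.comp_id f).trans (hZX P hP f))
  exact ht.summandY Q hQ Z g r hr.symm

lemma leftPerp_inter_eq (ht : IsTStructureOn A S X Y) : leftPerp A Y ∩ S = X := by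
  refine Set.Subset.antisymm ?_ fun P hP =>
    ⟨fun Q hQ f => ht.homZero P hP Q hQ f, ht.subsetX hP⟩
  rintro Z ⟨hZY, hZS⟩
  obtain ⟨P, Q, hP, hQ, f, g, _, hT⟩ := ht.exists_triangle Z hZS
  obtain ⟨s, hs⟩ := Triangle.coyoneda_exact₂ _ hT (𝟙 Z)
    ((Category.id_comp g).trans (hZY Q hQ g))
  exact ht.summandX P hP Z s f hs.symm

lemma leftPerp_rightPerp_inter_eq (ht : IsTStructureOn A S X Y) :
    leftPerp A (rightPerp A X) ∩ S = X := by
  refine Set.Subset.antisymm ?_ fun P hP => ⟨subset_leftPerp_rightPerp X hP, ht.subsetX hP⟩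
  exact (Set.inter_subset_inter_left _ (leftPerp_anti ht.subset_rightPerp)).trans
    ht.leftPerp_inter_eq.subset

end IsTStructureOn

lemma heartSet_inter_eq {S X Y X' Y' : Set (D A)}
    (hS : ∀ Z ∈ S, ∀ W : D A, Nonempty (Z ≅ W⟦(1 : ℤ)⟧) → W ∈ S)
    (hX : X' ∩ S = X) (hY : Y' ∩ S = Y) : heartSet A X' Y' ∩ S = heartSet A X Y := by
  subst hX hY
  ext Z
  simp only [heartSet, shiftSet, Set.mem_inter_iff, Set.mem_ofPred_eq]
  constructor
  · rintro ⟨⟨hZX, W, hW, e⟩, hZS⟩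
    exact ⟨⟨hZX, hZS⟩, W, ⟨hW, hS Z hZS W e⟩, e⟩
  · rintro ⟨⟨hZX, hZS⟩, W, ⟨hW, -⟩, e⟩
    exact ⟨⟨hZX, W, hW, e⟩, hZS⟩

end Perp

section Dbfp

variable {A : Type} [Ring A]

lemma mem_Dbfp_of_iso {Z W : D A} (e : W ≅ Z) (hZ : Z ∈ Dbfp A) : W ∈ Dbfp A := by
  obtain ⟨hfp, a, b, hbdd⟩ := hZ
  exact ⟨fun n => haveI := hfp n; .of_equiv ((H A n).mapIso e).symm.toLinearEquiv, a, b,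
    fun i hi => (hbdd i hi).of_iso ((H A i).mapIso e)⟩

lemma shift_mem_Dbfp {Z : D A} (hZ : Z ∈ Dbfp A) (n : ℤ) : Z⟦n⟧ ∈ Dbfp A := by
  obtain ⟨hfp, a, b, hbdd⟩ := hZ
  have e (i : ℤ) : (H A i).obj (Z⟦n⟧) ≅ (H A (n + i)).obj Z :=
    ((DerivedCategory.homologyFunctor (Mod A) 0).shiftIso n i (n + i) rfl).app Z
  exact ⟨fun i => haveI := hfp (n + i); .of_equiv (e i).symm.toLinearEquiv, a - n, b - n,
    fun i hi => (hbdd (n + i) (by omega)).of_iso (e i)⟩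

lemma mem_Dbfp_of_iso_shift {Z W : D A} (hZ : Z ∈ Dbfp A) (n : ℤ) (e : Z ≅ W⟦n⟧) :
    W ∈ Dbfp A :=
  mem_Dbfp_of_iso (((shiftFunctorCompIsoId (D A) n (-n) (add_neg_cancel n)).app W).symm ≪≫
    (shiftFunctor (D A) (-n)).mapIso e.symm) (shift_mem_Dbfp hZ (-n))

end Dbfp

theorem lift_restricts_back_general (A : Type) [Ring A]
    (X Y : Set (D A))
    (ht : IsTStructureOn A (Dbfp A) X Y) :
    leftPerp A (rightPerp A X) ∩ Dbfp A = X ∧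
    rightPerp A X ∩ Dbfp A = Y ∧
    heartSet A (leftPerp A (rightPerp A X)) (rightPerp A X) ∩ Dbfp A =
      heartSet A X Y :=
  ⟨ht.leftPerp_rightPerp_inter_eq, ht.rightPerp_inter_eq,
    heartSet_inter_eq (fun _ hZ _ ⟨e⟩ => mem_Dbfp_of_iso_shift hZ 1 e)
      ht.leftPerp_rightPerp_inter_eq ht.rightPerp_inter_eq⟩

/-- the lifted t-structure restricts back to `(X, Y)` on
`D^b(mod A)`, and accordingly its heart intersected with `D^b(mod A)` is the
heart of `(X, Y)`. -/
theorem lift_restricts_back (A : Type) [Ring A]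
    (hA : RightCoherent A) (X Y : Set (D A))
    (ht : IsTStructureOn A (Dbfp A) X Y)
    (hint : IsIntermediateOn A (Dbfp A) X) :
    leftPerp A (rightPerp A X) ∩ Dbfp A = X ∧
    rightPerp A X ∩ Dbfp A = Y ∧
    heartSet A (leftPerp A (rightPerp A X)) (rightPerp A X) ∩ Dbfp A =
      heartSet A X Y :=
  lift_restricts_back_general A X Y ht

end Paper
end
end

section
/- Let A be a finite dimensional algebra over a field k, let (X, Y) be an intermediate t-structure in D^b(mod A) with heart H, and let H' be the heart of the t-structure (^⊥Y, (^⊥Y)^⊥) in D(Mod A). Then H' is cogenerated by H: every object H' ∈ H' with Hom_{H'}(H', L) = 0 for all L ∈ H is zero. -/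
/-!
Common definitions for formalizing "Lifting and restricting t-structures"
(Marks–Zvonareva). Right `A`-modules are modelled as `ModuleCat Aᵐᵒᵖ`.
`D(Mod A)` is the derived category `DerivedCategory (ModuleCat Aᵐᵒᵖ)`;
`D^b(mod A)` is modelled, as is standard for coherent rings, as the full
subcategory of objects with bounded, finitely presented cohomologies.
Directed homotopy colimits are computed as colimits of directed diagrams
of complexes (filtered colimits of complexes of modules are exact).
-/

open CategoryTheory Limits Pretriangulated Opposite

noncomputable section

namespace Paper

universe u

variable (A : Type) [Ring A]

universe w₂ v₂ u₂

/-! Since `Hom(Z, -)` vanishes on `Y` for `Z ∈ ^⊥Y`, a map `Z ⟶ Q[1]` with `Q ∈ Y` factors through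
the `X`-approximation `P` of `Q[1]`. This `P` lies in the heart `H` of `(X, Y)`: a map
`V[1] ⟶ P` with `V ∈ X` dies in `Q[1]`, hence factors through `Q₂[-1]` for the `Y`-part `Q₂`,
and `Hom(V[2], Q₂) = 0`; so `P[-1] ∈ X^⊥ = Y`. Hence if `Z` admits no nonzero map to `H`, then
`Hom(Z, Y[1]) = 0`. For `Z ≅ W[1]` in the heart of `(^⊥Y, (^⊥Y)^⊥)` this puts `W` in
`^⊥Y ∩ (^⊥Y)^⊥ = 0`. -/

lemma _root_.CategoryTheory.Functor.forall_map_hom_eq_zero_iff {C D : Type*} [Category C]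
    [Category D] [HasZeroMorphisms C] [HasZeroMorphisms D] (F : C ⥤ D) [F.Full] [F.Faithful]
    [F.PreservesZeroMorphisms] {V U : C} :
    (∀ φ : F.obj V ⟶ F.obj U, φ = 0) ↔ ∀ g : V ⟶ U, g = 0 := by
  refine ⟨fun h g => F.map_eq_zero_iff.1 (h _), fun h φ => ?_⟩
  rw [← F.map_preimage φ, h (F.preimage φ), F.map_zero]

lemma _root_.CategoryTheory.Adjunction.forall_hom_eq_zero_iff {C D : Type*} [Category C]
    [Category D] [Preadditive C] [Preadditive D] {F : C ⥤ D} {G : D ⥤ C} (adj : F ⊣ G)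
    [F.Additive] {V : C} {U : D} :
    (∀ g : F.obj V ⟶ U, g = 0) ↔ ∀ f : V ⟶ G.obj U, f = 0 := by
  refine ⟨fun h f => ?_, fun h g => ?_⟩
  · rw [← (adj.homEquiv V U).apply_symm_apply f, h ((adj.homEquiv V U).symm f),
      adj.homAddEquiv_zero]
  · rw [← (adj.homEquiv V U).symm_apply_apply g, h (adj.homEquiv V U g),
      adj.homAddEquiv_symm_zero]

lemma _root_.CategoryTheory.forall_hom_shift_eq_zero_iff {C : Type*} [Category C] [Preadditive C]
    [HasShift C ℤ] [∀ n : ℤ, (shiftFunctor C n).Additive] {a b : ℤ} (hab : a + b = 0) {V U : C} :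
    (∀ g : V⟦a⟧ ⟶ U, g = 0) ↔ ∀ f : V ⟶ U⟦b⟧, f = 0 :=
  have : (shiftEquiv' C a b hab).functor.Additive := inferInstanceAs (shiftFunctor C a).Additive
  (shiftEquiv' C a b hab).toAdjunction.forall_hom_eq_zero_iff

lemma shift_mem_Dbfp_s16 {A : Type} [Ring A] {V : D A} (hV : V ∈ Dbfp A) (n : ℤ) :
    V⟦n⟧ ∈ Dbfp A := by
  obtain ⟨hfp, a, b, hab⟩ := hV
  have e (i : ℤ) : (H A i).obj (V⟦n⟧) ≅ (H A (n + i)).obj V :=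
    ((DerivedCategory.homologyFunctor (Mod A) 0).shiftIso n i (n + i) rfl).app V
  refine ⟨fun i => ?_, a - n, b - n, fun i hi => (hab (n + i) (by omega)).of_iso (e i)⟩
  have := hfp (n + i)
  exact Module.FinitePresentation.of_equiv (e i).symm.toLinearEquiv

lemma isZero_of_mem_of_mem_rightPerp {A : Type} [Ring A] {C : Set (D A)} {W : D A}
    (hW : W ∈ C) (hW' : W ∈ rightPerp A C) : IsZero W :=
  (IsZero.iff_id_eq_zero W).2 (hW' W hW _)

namespace IsTStructureOn

variable {A : Type} [Ring A] {S X Y : Set (D A)} (ht : IsTStructureOn A S X Y)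
include ht

lemma mem_Y_of_forall_hom_eq_zero {M : D A} (hM : M ∈ S) (h : ∀ P ∈ X, ∀ f : P ⟶ M, f = 0) :
    M ∈ Y := by
  obtain ⟨P, Q, hP, hQ, f, g, _, hT⟩ := ht.exists_triangle M hM
  obtain ⟨r, hr⟩ := Triangle.yoneda_exact₂ _ hT (𝟙 M) ((Category.comp_id f).trans (h P hP f))
  exact ht.summandY Q hQ M g r hr.symm

lemma mem_heartSet_of_triangle (hS : ∀ Z ∈ S, ∀ n : ℤ, Z⟦n⟧ ∈ S) {P Q Q₂ : D A}
    (hP : P ∈ X) (hQ : Q ∈ Y) (hQ₂ : Q₂ ∈ Y) {f : P ⟶ Q⟦(1 : ℤ)⟧} {g : Q⟦(1 : ℤ)⟧ ⟶ Q₂}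
    {h : Q₂ ⟶ P⟦(1 : ℤ)⟧} (hT : Triangle.mk f g h ∈ distTriang (D A)) :
    P ∈ heartSet A X Y := by
  have hX_Q₂ (V : D A) (hV : V ∈ X) (ψ : V⟦(1 : ℤ)⟧ ⟶ Q₂⟦(-1 : ℤ)⟧) : ψ = 0 :=
    (forall_hom_shift_eq_zero_iff (add_neg_cancel (1 : ℤ))).1
      (ht.homZero _ (ht.shiftX _ (ht.shiftX V hV)) Q₂ hQ₂) ψ
  have hX_P (V : D A) (hV : V ∈ X) (ξ : V⟦(1 : ℤ)⟧ ⟶ P) : ξ = 0 := by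
    have hξf : ξ ≫ f = 0 :=
      (shiftFunctor (D A) (1 : ℤ)).forall_map_hom_eq_zero_iff.2 (ht.homZero V hV Q hQ) _
    obtain ⟨ψ, rfl⟩ := Triangle.coyoneda_exact₂ _ (inv_rot_of_distTriang _ hT) ξ hξf
    rw [hX_Q₂ V hV ψ]
    exact zero_comp
  refine ⟨hP, P⟦(-1 : ℤ)⟧, ht.mem_Y_of_forall_hom_eq_zero (hS P (ht.subsetX hP) _)
    fun V hV => ?_, ⟨(shiftNegShift P (1 : ℤ)).symm⟩⟩
  exact (forall_hom_shift_eq_zero_iff (add_neg_cancel (1 : ℤ))).1 (hX_P V hV)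

lemma hom_to_shift_eq_zero (hS : ∀ Z ∈ S, ∀ n : ℤ, Z⟦n⟧ ∈ S) {Z : D A}
    (hZ : Z ∈ leftPerp A Y) (hH : ∀ L ∈ heartSet A X Y, ∀ f : Z ⟶ L, f = 0)
    {Q : D A} (hQ : Q ∈ Y) (φ : Z ⟶ Q⟦(1 : ℤ)⟧) : φ = 0 := by
  obtain ⟨P, Q₂, hP, hQ₂, f, g, h, hT⟩ := ht.exists_triangle _ (hS Q (ht.subsetY hQ) 1)
  obtain ⟨ψ, rfl⟩ := Triangle.coyoneda_exact₂ _ hT φ (hZ Q₂ hQ₂ _)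
  rw [hH P (ht.mem_heartSet_of_triangle hS hP hQ hQ₂ hT) ψ]
  exact zero_comp

end IsTStructureOn

theorem cogenerated_lift_heart_cogenerated_general (A : Type) [Ring A] (X Y : Set (D A))
    (ht : IsTStructureOn A (Dbfp A) X Y) :
    ∀ Z ∈ heartSet A (leftPerp A Y) (rightPerp A (leftPerp A Y)),
      (∀ L ∈ heartSet A X Y, ∀ f : Z ⟶ L, f = 0) → IsZero Z := by
  rintro Z ⟨hZ, W, hW, ⟨e⟩⟩ hH
  have hW_perp : W ∈ leftPerp A Y := fun Q hQ =>
    (shiftFunctor (D A) (1 : ℤ)).forall_map_hom_eq_zero_iff.1 fun φ => by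
      rw [← e.inv_hom_id_assoc φ,
        ht.hom_to_shift_eq_zero (fun _ hV n => shift_mem_Dbfp_s16 hV n) hZ hH hQ (e.hom ≫ φ),
        comp_zero]
  exact ((shiftFunctor (D A) (1 : ℤ)).map_isZero
    (isZero_of_mem_of_mem_rightPerp hW_perp hW)).of_iso e

/-- Theorem `thm silt` (2): the heart `H'` of the
t-structure `(^⊥Y, (^⊥Y)^⊥)` in `D(Mod A)` is cogenerated by the heart `H` of
`(X, Y)`: any object of `H'` with no nonzero morphism to any object of `H` is
zero. -/
theorem cogenerated_lift_heart_cogenerated (k : Type) [Field k]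
    (A : Type) [Ring A] [Algebra k A] [FiniteDimensional k A]
    (X Y : Set (D A)) (ht : IsTStructureOn A (Dbfp A) X Y)
    (hint : IsIntermediateOn A (Dbfp A) X) :
    ∀ Z ∈ heartSet A (leftPerp A Y) (rightPerp A (leftPerp A Y)),
      (∀ L ∈ heartSet A X Y, ∀ f : Z ⟶ L, f = 0) → IsZero Z :=
  cogenerated_lift_heart_cogenerated_general A X Y ht

end Paper
end
end
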